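/- arXiv:2407.03483 — 2 statements merged into one kernel-verified Lean document; each statement's English description precedes it below -/
import Mathlib

section
/- Let κ : ℝ → ℝ be ℓ-periodic and continuously differentiable, and let 𝔲 : ℝ × ℝ × ℝ → ℝ (arguments t, x, θ) be a C² solution of the embedding PDE ∂𝔲/∂t = (∂/∂x + ∂/∂θ)(κ(θ)(∂𝔲/∂x + ∂𝔲/∂θ)) with 𝔲 ℓ-periodic in θ. Then for every phase φ ∈ ℝ, the function u_φ(t,x) := 𝔲(t, x, x+φ) satisfies the heterogeneous diffusion PDE ∂u_φ/∂t = ∂/∂x (κ(x+φ) ∂u_φ/∂x). -/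
/-! Along the diagonal `θ = x + φ` the total `x`-derivative is `∂ₓ + ∂_θ` (chain rule). Applied to
`𝔲(t, ·, ·)` this identifies `κ(x + φ) ∂ₓ u_φ` with the flux `κ(θ)(∂ₓ𝔲 + ∂_θ𝔲)` of the embedding
PDE restricted to the diagonal; applied once more to the (C¹) flux, the `x`-derivative of
`κ(x + φ) ∂ₓ u_φ` becomes the right-hand side of the embedding PDE at `θ = x + φ`. -/

section PartialDerivatives

variable {E : Type*} [NormedAddCommGroup E] [NormedSpace ℝ E] {g : ℝ × ℝ → E}

theorem deriv_comp_prodMk_left {a b : ℝ} (hg : DifferentiableAt ℝ g (a, b)) :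
    deriv (fun y => g (y, b)) a = fderiv ℝ g (a, b) (1, 0) :=
  (hg.hasFDerivAt.comp_hasDerivAt (f := fun y => (y, b)) a
    ((hasDerivAt_id a).prodMk (hasDerivAt_const a b))).deriv

theorem deriv_comp_prodMk_right {a b : ℝ} (hg : DifferentiableAt ℝ g (a, b)) :
    deriv (fun θ => g (a, θ)) b = fderiv ℝ g (a, b) (0, 1) :=
  (hg.hasFDerivAt.comp_hasDerivAt (f := fun θ => (a, θ)) b
    ((hasDerivAt_const b a).prodMk (hasDerivAt_id b))).deriv

theorem deriv_comp_diagonal_add {a c : ℝ} (hg : DifferentiableAt ℝ g (a, a + c)) :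
    deriv (fun y => g (y, y + c)) a
      = deriv (fun y => g (y, a + c)) a + deriv (fun θ => g (a, θ)) (a + c) := by
  have hdiag : HasDerivAt (fun y => g (y, y + c)) (fderiv ℝ g (a, a + c) (1, 1)) a :=
    hg.hasFDerivAt.comp_hasDerivAt (f := fun y => (y, y + c)) a
      ((hasDerivAt_id a).prodMk ((hasDerivAt_id a).add_const c))
  rw [hdiag.deriv, deriv_comp_prodMk_left hg, deriv_comp_prodMk_right hg, ← map_add,
    Prod.mk_add_mk, add_zero, zero_add]

theorem ContDiff.deriv_comp_prodMk_left {m n : WithTop ℕ∞} (hg : ContDiff ℝ n g)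
    (hmn : m + 1 ≤ n) : ContDiff ℝ m (fun p : ℝ × ℝ => deriv (fun y => g (y, p.2)) p.1) := by
  have hdiff : Differentiable ℝ g := (hg.of_le (le_add_self.trans hmn)).differentiable one_ne_zero
  simp only [fun p : ℝ × ℝ => _root_.deriv_comp_prodMk_left (hdiff p)]
  exact (hg.fderiv_right hmn).clm_apply contDiff_const

theorem ContDiff.deriv_comp_prodMk_right {m n : WithTop ℕ∞} (hg : ContDiff ℝ n g)
    (hmn : m + 1 ≤ n) : ContDiff ℝ m (fun p : ℝ × ℝ => deriv (fun θ => g (p.1, θ)) p.2) := by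
  have hdiff : Differentiable ℝ g := (hg.of_le (le_add_self.trans hmn)).differentiable one_ne_zero
  simp only [fun p : ℝ × ℝ => _root_.deriv_comp_prodMk_right (hdiff p)]
  exact (hg.fderiv_right hmn).clm_apply contDiff_const

end PartialDerivatives

theorem stmt0_general (κ : ℝ → ℝ) (𝔲 : ℝ → ℝ → ℝ → ℝ)
    (hκ : ContDiff ℝ 1 κ)
    (h𝔲 : ContDiff ℝ 2 (fun p : ℝ × ℝ × ℝ => 𝔲 p.1 p.2.1 p.2.2))
    (hpde : ∀ t x θ,
      deriv (fun s => 𝔲 s x θ) t =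
        deriv (fun y => κ θ * (deriv (fun y' => 𝔲 t y' θ) y
            + deriv (fun θ' => 𝔲 t y θ') θ)) x
        + deriv (fun θ' => κ θ' * (deriv (fun y' => 𝔲 t y' θ') x
            + deriv (fun θ'' => 𝔲 t x θ'') θ')) θ) :
    ∀ φ t x,
      deriv (fun s => 𝔲 s x (x + φ)) t =
        deriv (fun y => κ (y + φ) * deriv (fun y' => 𝔲 t y' (y' + φ)) y) x := by
  intro φ t x
  let U : ℝ × ℝ → ℝ := fun p => 𝔲 t p.1 p.2
  have hU : ContDiff ℝ 2 U := h𝔲.comp (contDiff_const.prodMk contDiff_id)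
  let flux : ℝ × ℝ → ℝ := fun p =>
    κ p.2 * (deriv (fun y => U (y, p.2)) p.1 + deriv (fun θ => U (p.1, θ)) p.2)
  have hflux : ContDiff ℝ 1 flux := (hκ.comp contDiff_snd).mul
    ((hU.deriv_comp_prodMk_left le_rfl).add (hU.deriv_comp_prodMk_right le_rfl))
  have hflux_diag : (fun y => κ (y + φ) * deriv (fun y' => 𝔲 t y' (y' + φ)) y)
      = fun y => flux (y, y + φ) := funext fun y => by
    rw [deriv_comp_diagonal_add (g := U) (hU.differentiable (by norm_num) _)]
  rw [hpde, hflux_diag, deriv_comp_diagonal_add (hflux.differentiable one_ne_zero _)]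

/-- Phase-shift embedding lemma (1-D, α = 1): every solution of the embedding PDE,
evaluated along the diagonal θ = x + φ, solves the heterogeneous diffusion PDE. -/
theorem stmt0 (ℓ : ℝ) (κ : ℝ → ℝ) (𝔲 : ℝ → ℝ → ℝ → ℝ)
    (hκ : ContDiff ℝ 1 κ) (hκper : Function.Periodic κ ℓ)
    (h𝔲 : ContDiff ℝ 2 (fun p : ℝ × ℝ × ℝ => 𝔲 p.1 p.2.1 p.2.2))
    (h𝔲per : ∀ t x, Function.Periodic (𝔲 t x) ℓ)
    (hpde : ∀ t x θ,
      deriv (fun s => 𝔲 s x θ) t =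
        deriv (fun y => κ θ * (deriv (fun y' => 𝔲 t y' θ) y
            + deriv (fun θ' => 𝔲 t y θ') θ)) x
        + deriv (fun θ' => κ θ' * (deriv (fun y' => 𝔲 t y' θ') x
            + deriv (fun θ'' => 𝔲 t x θ'') θ')) θ) :
    ∀ φ t x,
      deriv (fun s => 𝔲 s x (x + φ)) t =
        deriv (fun y => κ (y + φ) * deriv (fun y' => 𝔲 t y' (y' + φ)) y) x :=
  stmt0_general κ 𝔲 hκ h𝔲 hpde
end

section
/- Define the coordinate transform u = U/√(1 − 2V/(1+2U²)), v = U² + V/(1 − 2V/(1+2U²)), valid for 2V < 1 + 2U². Under this transform, the system du/dt = −uv, dv/dt = −v + u² − 2v² is equivalent to dU/dt = −U³, dV/dt = −V[1/(1+2U²) + 4U²]. Consequently, every solution with initial data (U₀,V₀) in the domain of validity satisfies |V(t)| ≤ |V₀| e^{−t} for all t ≥ 0. -/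
/-!
With `w = 1 - 2V/(1+2U²)` the transform reads `u = U/√w`, `v = U² + V/w`, and it is explicitly
invertible: `1 + 2v - 2u² = 1/w`, so `U = u/√(1+2v-2u²)` and `V = (v/w - u²)w²`. Each direction
of the conjugacy is then a chain-rule computation through the explicit map, using that along the
`(U, V)`-flow the weight evolves by `w' = 2V`. For the decay, `V² e^{2t}` is nonincreasing because
the bracket `1/(1+2U²) + 4U² ≥ (1 - 2U²) + 4U²` is at least `1`.
-/

open Real

namespace MarvellousTransform

noncomputable def weight (U V : ℝ) : ℝ := 1 - 2 * V / (1 + 2 * U ^ 2)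

def dualWeight (u v : ℝ) : ℝ := 1 + 2 * v - 2 * u ^ 2

noncomputable def toU (U V : ℝ) : ℝ := U / √(weight U V)

noncomputable def toV (U V : ℝ) : ℝ := U ^ 2 + V / weight U V

noncomputable def ofU (u v : ℝ) : ℝ := u / √(dualWeight u v)

noncomputable def ofV (u v : ℝ) : ℝ := (v * dualWeight u v - u ^ 2) / dualWeight u v ^ 2

section Pointwise

variable {U V : ℝ}

lemma weight_pos (hdom : 2 * V < 1 + 2 * U ^ 2) : 0 < weight U V := by
  rwa [weight, sub_pos, div_lt_one (by positivity)]

lemma dualWeight_toU_toV (hdom : 2 * V < 1 + 2 * U ^ 2) :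
    dualWeight (toU U V) (toV U V) = (weight U V)⁻¹ := by
  have hw := weight_pos hdom
  have hAV : 1 + 2 * U ^ 2 - 2 * V ≠ 0 := by linarith
  rw [dualWeight, toV, toU, div_pow, sq_sqrt hw.le, weight]
  field_simp
  ring

lemma ofU_toU (hdom : 2 * V < 1 + 2 * U ^ 2) : ofU (toU U V) (toV U V) = U := by
  rw [ofU, dualWeight_toU_toV hdom, sqrt_inv, div_inv_eq_mul, toU,
    div_mul_cancel₀ _ (sqrt_pos.mpr (weight_pos hdom)).ne']

lemma ofV_toV (hdom : 2 * V < 1 + 2 * U ^ 2) : ofV (toU U V) (toV U V) = V := by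
  have hw := weight_pos hdom
  rw [ofV, dualWeight_toU_toV hdom, toV, toU, div_pow, sq_sqrt hw.le]
  generalize weight U V = w at hw ⊢
  field_simp
  ring

end Pointwise

section Forward

variable {U V : ℝ → ℝ} {t : ℝ}

lemma hasDerivAt_weight (hU : HasDerivAt U (-U t ^ 3) t)
    (hV : HasDerivAt V (-V t * (1 / (1 + 2 * U t ^ 2) + 4 * U t ^ 2)) t) :
    HasDerivAt (fun s => weight (U s) (V s)) (2 * V t) t := by
  have hA : 1 + 2 * U t ^ 2 ≠ 0 := by positivity
  refine (((hV.const_mul 2).div ((hU.fun_pow 2).const_mul 2 |>.const_add 1) hA).const_sub 1)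
    |>.congr_deriv ?_
  field_simp
  ring

lemma hasDerivAt_toU (hdom : 2 * V t < 1 + 2 * U t ^ 2) (hU : HasDerivAt U (-U t ^ 3) t)
    (hV : HasDerivAt V (-V t * (1 / (1 + 2 * U t ^ 2) + 4 * U t ^ 2)) t) :
    HasDerivAt (fun s => toU (U s) (V s)) (-(toU (U t) (V t) * toV (U t) (V t))) t := by
  have hw := weight_pos hdom
  have hr := sqrt_pos.mpr hw
  refine (hU.div ((hasDerivAt_weight hU hV).sqrt hw.ne') hr.ne').congr_deriv ?_
  have hr2 := sq_sqrt hw.le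
  rw [toU, toV]
  generalize √(weight (U t) (V t)) = r at hr hr2 ⊢
  rw [← hr2]
  field_simp
  ring

lemma hasDerivAt_toV (hdom : 2 * V t < 1 + 2 * U t ^ 2) (hU : HasDerivAt U (-U t ^ 3) t)
    (hV : HasDerivAt V (-V t * (1 / (1 + 2 * U t ^ 2) + 4 * U t ^ 2)) t) :
    HasDerivAt (fun s => toV (U s) (V s))
      (-toV (U t) (V t) + toU (U t) (V t) ^ 2 - 2 * toV (U t) (V t) ^ 2) t := by
  have hw := weight_pos hdom
  refine ((hU.fun_pow 2).add (hV.div (hasDerivAt_weight hU hV) hw.ne')).congr_deriv ?_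
  have hwA : weight (U t) (V t) * (1 + 2 * U t ^ 2) = 1 + 2 * U t ^ 2 - 2 * V t := by
    rw [weight]
    field_simp
  rw [toU, toV, div_pow, sq_sqrt hw.le]
  generalize weight (U t) (V t) = w at hw hwA ⊢
  field_simp
  linear_combination U t ^ 2 * w * hwA

end Forward

section Backward

variable {u v : ℝ → ℝ} {t : ℝ}

lemma hasDerivAt_dualWeight (hu : HasDerivAt u (-(u t * v t)) t)
    (hv : HasDerivAt v (-v t + u t ^ 2 - 2 * v t ^ 2) t) :
    HasDerivAt (fun s => dualWeight (u s) (v s))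
      (2 * (u t ^ 2 - v t * dualWeight (u t) (v t))) t := by
  refine (((hv.const_mul 2).const_add 1).fun_sub ((hu.fun_pow 2).const_mul 2)).congr_deriv ?_
  rw [dualWeight]
  ring

lemma hasDerivAt_ofU (hS : 0 < dualWeight (u t) (v t)) (hu : HasDerivAt u (-(u t * v t)) t)
    (hv : HasDerivAt v (-v t + u t ^ 2 - 2 * v t ^ 2) t) :
    HasDerivAt (fun s => ofU (u s) (v s)) (-ofU (u t) (v t) ^ 3) t := by
  have hr := sqrt_pos.mpr hS
  refine (hu.div ((hasDerivAt_dualWeight hu hv).sqrt hS.ne') hr.ne').congr_deriv ?_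
  have hr2 := sq_sqrt hS.le
  rw [ofU]
  generalize √(dualWeight (u t) (v t)) = r at hr hr2 ⊢
  rw [← hr2]
  field_simp
  ring

lemma hasDerivAt_ofV (hS : 0 < dualWeight (u t) (v t)) (hu : HasDerivAt u (-(u t * v t)) t)
    (hv : HasDerivAt v (-v t + u t ^ 2 - 2 * v t ^ 2) t) :
    HasDerivAt (fun s => ofV (u s) (v s))
      (-ofV (u t) (v t) * (1 / (1 + 2 * ofU (u t) (v t) ^ 2) + 4 * ofU (u t) (v t) ^ 2)) t := by
  have hS' := hasDerivAt_dualWeight hu hv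
  refine (((hv.fun_mul hS').fun_sub (hu.fun_pow 2)).div (hS'.fun_pow 2)
    (pow_ne_zero 2 hS.ne')).congr_deriv ?_
  rw [ofV, ofU, div_pow, sq_sqrt hS.le]
  generalize hSdef : dualWeight (u t) (v t) = S at hS ⊢
  rw [show v t = (S + 2 * u t ^ 2 - 1) / 2 by rw [← hSdef, dualWeight]; ring]
  have : S + 2 * u t ^ 2 ≠ 0 := by positivity
  field_simp
  ring

end Backward

end MarvellousTransform

lemma one_le_one_div_one_add_two_mul_sq_add (x : ℝ) : 1 ≤ 1 / (1 + 2 * x ^ 2) + 4 * x ^ 2 := by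
  have h : 1 - 2 * x ^ 2 ≤ 1 / (1 + 2 * x ^ 2) := by
    rw [le_div_iff₀ (by positivity)]
    nlinarith [sq_nonneg (x ^ 2)]
  nlinarith [sq_nonneg x]

lemma abs_le_abs_mul_exp_neg_of_hasDerivAt {V c : ℝ → ℝ} (hV : ∀ t, HasDerivAt V (-V t * c t) t)
    (hc : ∀ t, 1 ≤ c t) {a b : ℝ} (hab : a ≤ b) : |V b| ≤ |V a| * exp (-(b - a)) := by
  have hf : ∀ t, HasDerivAt (fun s => V s ^ 2 * exp (2 * s))
      (2 * V t ^ 2 * exp (2 * t) * (1 - c t)) t := fun t => by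
    refine (((hV t).fun_pow 2).fun_mul (((hasDerivAt_id t).const_mul 2).exp)).congr_deriv ?_
    simp only [id]
    ring
  have hanti : Antitone (fun s => V s ^ 2 * exp (2 * s)) :=
    antitone_of_hasDerivAt_nonpos hf fun t =>
      mul_nonpos_of_nonneg_of_nonpos (by positivity) (by linarith [hc t])
  have hsq : V b ^ 2 ≤ (|V a| * exp (-(b - a))) ^ 2 :=
    calc V b ^ 2 = V b ^ 2 * exp (2 * b) * exp (-(2 * b)) := by
          rw [mul_assoc, ← exp_add, add_neg_cancel, exp_zero, mul_one]
      _ ≤ V a ^ 2 * exp (2 * a) * exp (-(2 * b)) :=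
          mul_le_mul_of_nonneg_right (hanti hab) (exp_pos _).le
      _ = (|V a| * exp (-(b - a))) ^ 2 := by
          rw [mul_pow, sq_abs, ← exp_nat_mul, mul_assoc, ← exp_add]
          congr 2
          push_cast
          ring
  simpa [abs_of_nonneg (by positivity : 0 ≤ |V a| * exp (-(b - a)))] using sq_le_sq.mp hsq

open MarvellousTransform in
theorem stmt3_general (U V : ℝ → ℝ) (hdom : ∀ t, 2 * V t < 1 + 2 * (U t)^2)
    (u v : ℝ → ℝ)
    (hu : u = fun t => U t / Real.sqrt (1 - 2 * V t / (1 + 2 * (U t)^2)))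
    (hv : v = fun t => (U t)^2 + V t / (1 - 2 * V t / (1 + 2 * (U t)^2))) :
    ((∀ t, HasDerivAt U (-(U t)^3) t ∧
        HasDerivAt V (-(V t) * (1/(1 + 2*(U t)^2) + 4*(U t)^2)) t) ↔
      (∀ t, HasDerivAt u (-(u t * v t)) t ∧
        HasDerivAt v (-(v t) + (u t)^2 - 2*(v t)^2) t)) ∧
    ((∀ t, HasDerivAt U (-(U t)^3) t ∧
        HasDerivAt V (-(V t) * (1/(1 + 2*(U t)^2) + 4*(U t)^2)) t) →
      ∀ t ≥ (0:ℝ), |V t| ≤ |V 0| * Real.exp (-t)) := by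
  replace hu : u = fun t => toU (U t) (V t) := hu
  replace hv : v = fun t => toV (U t) (V t) := hv
  have hU : U = fun t => ofU (u t) (v t) := funext fun t => by rw [hu, hv, ofU_toU (hdom t)]
  have hV : V = fun t => ofV (u t) (v t) := funext fun t => by rw [hu, hv, ofV_toV (hdom t)]
  have hS : ∀ t, 0 < dualWeight (u t) (v t) := fun t => by
    rw [hu, hv, dualWeight_toU_toV (hdom t)]
    exact inv_pos.mpr (weight_pos (hdom t))
  refine ⟨⟨fun h t => ?_, fun h t => ?_⟩, fun h t ht => ?_⟩
  · rw [hu, hv]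
    exact ⟨hasDerivAt_toU (hdom t) (h t).1 (h t).2, hasDerivAt_toV (hdom t) (h t).1 (h t).2⟩
  · rw [hU, hV]
    exact ⟨hasDerivAt_ofU (hS t) (h t).1 (h t).2, hasDerivAt_ofV (hS t) (h t).1 (h t).2⟩
  · simpa using abs_le_abs_mul_exp_neg_of_hasDerivAt (fun s => (h s).2)
      (fun s => one_le_one_div_one_add_two_mul_sq_add (U s)) ht

/-- The marvellous coordinate transform conjugates du/dt = −uv, dv/dt = −v+u²−2v²
with dU/dt = −U³, dV/dt = −V[1/(1+2U²)+4U²] on the domain 2V < 1+2U², and every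
solution of the transformed system has |V(t)| ≤ |V(0)| e^{−t} for t ≥ 0. -/
theorem stmt3 (U V : ℝ → ℝ) (hdom : ∀ t, 2 * V t < 1 + 2 * (U t)^2)
    (hU : Differentiable ℝ U) (hV : Differentiable ℝ V)
    (u v : ℝ → ℝ)
    (hu : u = fun t => U t / Real.sqrt (1 - 2 * V t / (1 + 2 * (U t)^2)))
    (hv : v = fun t => (U t)^2 + V t / (1 - 2 * V t / (1 + 2 * (U t)^2))) :
    ((∀ t, HasDerivAt U (-(U t)^3) t ∧
        HasDerivAt V (-(V t) * (1/(1 + 2*(U t)^2) + 4*(U t)^2)) t) ↔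
      (∀ t, HasDerivAt u (-(u t * v t)) t ∧
        HasDerivAt v (-(v t) + (u t)^2 - 2*(v t)^2) t)) ∧
    ((∀ t, HasDerivAt U (-(U t)^3) t ∧
        HasDerivAt V (-(V t) * (1/(1 + 2*(U t)^2) + 4*(U t)^2)) t) →
      ∀ t ≥ (0:ℝ), |V t| ≤ |V 0| * Real.exp (-t)) :=
  stmt3_general U V hdom u v hu hv
end
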